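/- Conditions (I^B) and (II^B) of the dichotomy are incompatible for any Borel partial quasi-order ≼ on ω^ω: there cannot simultaneously exist (a) an ordinal α < ω₁ and a Borel map h : ω^ω → 2^α with x ≼ y → h(x) ≤lex h(y) and h(x) = h(y) → (x ≼ y ∧ y ≼ x), and (b) a continuous injection F : 2^ω → ω^ω with a ≤₀ b → F(a) ≼ F(b) and ¬(a E₀ b) → ¬(F(a) ≼ F(b)). -/

import Mathlib

/-- Eventual equality on `2^ω`. -/
def E0 (a b : ℕ → Bool) : Prop := ∃ m, ∀ k, k ≥ m → a k = b k

/-- The anti-lexicographical relation `≤₀` on `2^ω`. -/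
def le0 (a b : ℕ → Bool) : Prop :=
  a = b ∨ ∃ m, (∀ k, k > m → a k = b k) ∧ a m < b m

/-- Lexicographical order on `2^α` for a linearly ordered index. -/
def leLex {ι : Type*} [LinearOrder ι] (u v : ι → Bool) : Prop :=
  u = v ∨ ∃ i, (∀ j, j < i → u j = v j) ∧ u i < v i

open Set Filter Topology

/-! ### Auxiliary definitions -/

/-- Baire space `2^ω`. -/
abbrev XX := ℕ → Bool

/-- Pointwise negation. -/
def barX (a : XX) : XX := fun k => !a k

/-- Flip the coordinates in a finite set. -/
def flipS (G : Finset ℕ) (a : XX) : XX := fun k => if k ∈ G then !a k else a k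

/-- Strict lexicographic order. -/
def sltLex {ι : Type*} [LinearOrder ι] (u v : ι → Bool) : Prop :=
  ∃ i, (∀ j, j < i → u j = v j) ∧ u i < v i

section Lex

variable {ι : Type*} [LinearOrder ι]

lemma leLex_iff {u v : ι → Bool} : leLex u v ↔ u = v ∨ sltLex u v := Iff.rfl

lemma sltLex_trans {u v w : ι → Bool} (h1 : sltLex u v) (h2 : sltLex v w) : sltLex u w := by
  obtain ⟨i, hi, hlt⟩ := h1
  obtain ⟨i', hi', hlt'⟩ := h2
  rcases lt_trichotomy i i' with h | h | h
  · exact ⟨i, fun j hj => (hi j hj).trans (hi' j (hj.trans h)),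
      by rw [← hi' i h]; exact hlt⟩
  · subst h
    exact ⟨i, fun j hj => (hi j hj).trans (hi' j hj), lt_trans hlt hlt'⟩
  · exact ⟨i', fun j hj => (hi j (hj.trans h)).trans (hi' j hj),
      by rw [hi i' h]; exact hlt'⟩

lemma sltLex_irrefl (u : ι → Bool) : ¬ sltLex u u := by
  rintro ⟨i, -, h⟩; exact lt_irrefl _ h

lemma sltLex_asymm {u v : ι → Bool} (h1 : sltLex u v) (h2 : sltLex v u) : False :=
  sltLex_irrefl u (sltLex_trans h1 h2)

lemma leLex_sltLex_trans {u v w : ι → Bool} (h1 : leLex u v) (h2 : sltLex v w) : sltLex u w := by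
  rcases h1 with rfl | h1
  · exact h2
  · exact sltLex_trans h1 h2

lemma sltLex_leLex_trans {u v w : ι → Bool} (h1 : sltLex u v) (h2 : leLex v w) : sltLex u w := by
  rcases h2 with rfl | h2
  · exact h1
  · exact sltLex_trans h1 h2

lemma sltLex_total (hwf : WellFounded ((· < ·) : ι → ι → Prop)) {u v : ι → Bool}
    (hne : u ≠ v) : sltLex u v ∨ sltLex v u := by
  have hSne : {i | u i ≠ v i}.Nonempty := by
    rcases Function.ne_iff.mp hne with ⟨i, hi⟩
    exact ⟨i, hi⟩
  have hmem : u (hwf.min _ hSne) ≠ v (hwf.min _ hSne) := hwf.min_mem _ hSne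
  have hagree : ∀ j, j < hwf.min _ hSne → u j = v j := by
    intro j hj
    by_contra hne'
    exact hwf.not_lt_min _ hne' hj
  rcases lt_or_gt_of_ne hmem with h | h
  · exact Or.inl ⟨_, hagree, h⟩
  · exact Or.inr ⟨_, fun j hj => (hagree j hj).symm, h⟩

end Lex

/-! ### Basic facts about `E0`, `le0`, `flipS`. -/

lemma E0_refl (a : XX) : E0 a a := ⟨0, fun _ _ => rfl⟩

lemma E0_symm {a b : XX} (h : E0 a b) : E0 b a := by
  obtain ⟨m, hm⟩ := h
  exact ⟨m, fun k hk => (hm k hk).symm⟩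

lemma E0_trans {a b c : XX} (h1 : E0 a b) (h2 : E0 b c) : E0 a c := by
  obtain ⟨m, hm⟩ := h1
  obtain ⟨n, hn⟩ := h2
  exact ⟨max m n, fun k hk =>
    (hm k (le_trans (le_max_left _ _) hk)).trans (hn k (le_trans (le_max_right _ _) hk))⟩

lemma barX_barX (a : XX) : barX (barX a) = a := by
  funext k; simp [barX]

lemma not_E0_barX (a : XX) : ¬ E0 a (barX a) := by
  rintro ⟨m, hm⟩
  have := hm m le_rfl
  simp [barX] at this

lemma le0_refl (a : XX) : le0 a a := Or.inl rfl

lemma le0_E0 {a b : XX} (h : le0 a b) : E0 a b := by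
  rcases h with rfl | ⟨m, hm, -⟩
  · exact E0_refl a
  · exact ⟨m + 1, fun k hk => hm k (by omega)⟩

lemma le0_barX {a b : XX} (h : le0 a b) : le0 (barX b) (barX a) := by
  rcases h with rfl | ⟨m, hm, hlt⟩
  · exact le0_refl _
  · refine Or.inr ⟨m, fun k hk => by simp [barX, hm k hk], ?_⟩
    rcases Bool.lt_iff.mp hlt with ⟨h1, h2⟩
    simp [barX, h1, h2]

lemma le0_trans {a b c : XX} (h1 : le0 a b) (h2 : le0 b c) : le0 a c := by
  rcases h1 with rfl | ⟨m1, h1e, h1l⟩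
  · exact h2
  rcases h2 with rfl | ⟨m2, h2e, h2l⟩
  · exact Or.inr ⟨m1, h1e, h1l⟩
  rcases lt_trichotomy m1 m2 with h | h | h
  · refine Or.inr ⟨m2, fun k hk => (h1e k (h.trans hk)).trans (h2e k hk), ?_⟩
    rw [h1e m2 h]; exact h2l
  · subst h
    exact Or.inr ⟨m1, fun k hk => (h1e k hk).trans (h2e k hk), lt_trans h1l h2l⟩
  · refine Or.inr ⟨m1, fun k hk => (h1e k hk).trans (h2e k (h.trans hk)), ?_⟩
    rw [h2e m1 h] at h1l; exact h1l

lemma le0_antisymm {a b : XX} (h1 : le0 a b) (h2 : le0 b a) : a = b := by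
  rcases h1 with rfl | ⟨m1, h1e, h1l⟩
  · rfl
  rcases h2 with rfl | ⟨m2, h2e, h2l⟩
  · rfl
  exfalso
  rcases lt_trichotomy m1 m2 with h | h | h
  · rw [h1e m2 h] at h2l; exact lt_irrefl _ h2l
  · subst h; exact lt_asymm h1l h2l
  · rw [h2e m1 h] at h1l; exact lt_irrefl _ h1l

/-- Last difference of two `E0`-equivalent sequences above a given difference. -/
lemma last_diff {a b : XX} (h : E0 a b) (k0 : ℕ) (hk0 : a k0 ≠ b k0) :
    ∃ m, k0 ≤ m ∧ a m ≠ b m ∧ ∀ k, k > m → a k = b k := by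
  classical
  obtain ⟨M, hM⟩ := h
  have hk0M : k0 ≤ M := by
    by_contra hc
    exact hk0 (hM k0 (by omega))
  refine ⟨Nat.findGreatest (fun k => a k ≠ b k) M,
    Nat.le_findGreatest (P := fun k => a k ≠ b k) hk0M hk0,
    Nat.findGreatest_spec (P := fun k => a k ≠ b k) hk0M hk0, ?_⟩
  intro k hk
  by_cases hkM : k ≤ M
  · by_contra hne
    exact Nat.findGreatest_is_greatest (P := fun k => a k ≠ b k) hk hkM hne
  · exact hM k (by omega)

lemma E0_total {a b : XX} (h : E0 a b) : le0 a b ∨ le0 b a := by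
  by_cases hab : a = b
  · exact Or.inl (Or.inl hab)
  obtain ⟨k, hk⟩ := Function.ne_iff.mp hab
  obtain ⟨m, -, hm, hmax⟩ := last_diff h k hk
  rcases lt_or_gt_of_ne hm with hlt | hlt
  · exact Or.inl (Or.inr ⟨m, hmax, hlt⟩)
  · exact Or.inr (Or.inr ⟨m, fun j hj => (hmax j hj).symm, hlt⟩)

lemma flipS_flipS (F G : Finset ℕ) (a : XX) :
    flipS F (flipS G a) = flipS (symmDiff F G) a := by
  funext k
  by_cases hF : k ∈ F <;> by_cases hG : k ∈ G <;>
    simp [flipS, hF, hG, Finset.mem_symmDiff]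

lemma flipS_empty (a : XX) : flipS ∅ a = a := by
  funext k; simp [flipS]

lemma flipS_flipS_self (F : Finset ℕ) (a : XX) : flipS F (flipS F a) = a := by
  rw [flipS_flipS, symmDiff_self, Finset.bot_eq_empty, flipS_empty]

lemma E0_flipS (F : Finset ℕ) (a : XX) : E0 (flipS F a) a := by
  refine ⟨F.sup id + 1, fun k hk => ?_⟩
  have hkF : k ∉ F := by
    intro hkF
    have := Finset.le_sup (f := id) hkF
    simp only [id] at this
    omega
  simp [flipS, hkF]

lemma E0_exists_flipS {a b : XX} (h : E0 a b) : ∃ F, b = flipS F a := by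
  classical
  obtain ⟨M, hM⟩ := h
  refine ⟨(Finset.range M).filter (fun k => a k ≠ b k), ?_⟩
  funext k
  by_cases hk : k ∈ (Finset.range M).filter (fun k => a k ≠ b k)
  · have h2 := (Finset.mem_filter.mp hk).2
    simp only [flipS, if_pos hk]
    revert h2
    cases a k <;> cases b k <;> simp
  · simp only [flipS, if_neg hk]
    by_cases hkM : k < M
    · by_contra hne
      exact hk (Finset.mem_filter.mpr ⟨Finset.mem_range.mpr hkM, fun h' => hne h'.symm⟩)
    · exact (hM k (by omega)).symm

lemma continuous_flipS (F : Finset ℕ) : Continuous (flipS F) := by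
  refine continuous_pi fun k => ?_
  exact (continuous_of_discreteTopology (f := fun b : Bool => if k ∈ F then !b else b)).comp
    (continuous_apply k)

lemma continuous_barX : Continuous barX := by
  refine continuous_pi fun k => ?_
  exact (continuous_of_discreteTopology (f := fun b : Bool => !b)).comp (continuous_apply k)

/-- `flipS F` as a homeomorphism. -/
def flipHomeo (F : Finset ℕ) : XX ≃ₜ XX where
  toFun := flipS F
  invFun := flipS F
  left_inv := flipS_flipS_self F
  right_inv := flipS_flipS_self F
  continuous_toFun := continuous_flipS F
  continuous_invFun := continuous_flipS F

/-- `barX` as a homeomorphism. -/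
def barHomeo : XX ≃ₜ XX where
  toFun := barX
  invFun := barX
  left_inv := barX_barX
  right_inv := barX_barX
  continuous_toFun := continuous_barX
  continuous_invFun := continuous_barX

lemma measurable_flipS (F : Finset ℕ) : Measurable (flipS F) :=
  (continuous_flipS F).measurable

lemma measurable_barX : Measurable barX := continuous_barX.measurable

/-! ### Cylinders and meagerness -/

lemma exists_cyl_subset {O : Set XX} (hO : IsOpen O) {x : XX} (hx : x ∈ O) :
    ∃ n, {y : XX | ∀ k, k < n → y k = x k} ⊆ O := by
  obtain ⟨I, u, hIu, hsub⟩ := isOpen_pi_iff.mp hO x hx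
  refine ⟨I.sup id + 1, fun y hy => hsub ?_⟩
  intro i hi
  have hi' : i ∈ I := hi
  have : i < I.sup id + 1 := by
    have := Finset.le_sup (f := id) hi'
    simp only [id] at this
    omega
  rw [hy i this]
  exact (hIu i hi').2

lemma residual_subset_not_meagre {R M : Set XX} (hR : R ∈ residual XX) (hM : IsMeagre M)
    (hRM : R ⊆ M) : False := by
  have h2 : R ∩ Mᶜ ∈ residual XX := Filter.inter_mem hR hM
  obtain ⟨x, hx⟩ := (dense_of_mem_residual h2).nonempty
  exact hx.2 (hRM hx.1)

lemma not_meagre_pair {s : Set XX} (hs : IsMeagre s) (ht : IsMeagre sᶜ) : False :=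
  residual_subset_not_meagre (ht : sᶜᶜ ∈ residual XX) hs (by rw [compl_compl])

lemma isMeagre_union {s t : Set XX} (hs : IsMeagre s) (ht : IsMeagre t) : IsMeagre (s ∪ t) := by
  show (s ∪ t)ᶜ ∈ residual XX
  rw [compl_union]
  exact Filter.inter_mem hs ht

lemma isMeagre_iUnion' {κ : Sort*} [Countable κ] {s : κ → Set XX}
    (h : ∀ i, IsMeagre (s i)) : IsMeagre (⋃ i, s i) := by
  show (⋃ i, s i)ᶜ ∈ residual XX
  rw [compl_iUnion]
  exact (countable_iInter_mem).mpr h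

lemma isMeagre_singleton (x : XX) : IsMeagre ({x} : Set XX) := by
  show ({x} : Set XX)ᶜ ∈ residual XX
  apply residual_of_dense_open isOpen_compl_singleton
  rw [dense_iff_inter_open]
  intro O hO hOne
  by_cases hxO : x ∈ O
  · obtain ⟨n, hcyl⟩ := exists_cyl_subset hO hxO
    refine ⟨flipS {n} x, hcyl fun k hk => ?_, fun hmem => ?_⟩
    · have : k ∉ ({n} : Finset ℕ) := by
        simp only [Finset.mem_singleton]
        omega
      simp [flipS, this]
    · have := congrFun (Set.mem_singleton_iff.mp hmem) n
      simp [flipS] at this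
  · obtain ⟨y, hy⟩ := hOne
    exact ⟨y, hy, fun h => hxO ((Set.mem_singleton_iff.mp h) ▸ hy)⟩

/-- Topological zero-one law for sets invariant under finite flips. -/
lemma zero_one {A : Set XX} (hA : BaireMeasurableSet A)
    (hinv : ∀ G a, flipS G a ∈ A ↔ a ∈ A) : IsMeagre A ∨ IsMeagre Aᶜ := by
  classical
  by_cases hm : IsMeagre A
  · exact Or.inl hm
  right
  obtain ⟨O, hO, hAO⟩ := hA.residualEq_isOpen
  have hsd : IsMeagre {x : XX | (x ∈ A) = (x ∈ O)}ᶜ := by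
    show {x : XX | (x ∈ A) = (x ∈ O)}ᶜᶜ ∈ residual XX
    rw [compl_compl]
    exact hAO
  have hOne : O.Nonempty := by
    rcases Set.eq_empty_or_nonempty O with hOe | hne
    · exfalso
      apply hm
      apply hsd.mono
      intro y hy
      simp only [mem_compl_iff, mem_setOf_eq]
      intro heq'
      rw [hOe] at heq'
      exact absurd (heq' ▸ hy) (Set.notMem_empty y)
    · exact hne
  obtain ⟨x, hx⟩ := hOne
  obtain ⟨n, hcyl⟩ := exists_cyl_subset hO hx
  have base : IsMeagre (Aᶜ ∩ {y : XX | ∀ k, k < n → y k = x k}) := by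
    apply hsd.mono
    rintro y ⟨hyA, hyC⟩
    simp only [mem_compl_iff, mem_setOf_eq]
    intro h
    exact hyA (by rw [h]; exact hcyl hyC)
  have hsub : Aᶜ ⊆ ⋃ G : Finset ℕ, flipS G ⁻¹' (Aᶜ ∩ {y : XX | ∀ k, k < n → y k = x k}) := by
    intro a ha
    refine mem_iUnion.mpr ⟨(Finset.range n).filter (fun k => a k ≠ x k), ?_, ?_⟩
    · intro hmem
      exact ha ((hinv _ a).mp hmem)
    · intro k hk
      by_cases hak : a k = x k
      · have : k ∉ (Finset.range n).filter (fun k => a k ≠ x k) := by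
          simp [Finset.mem_filter, hak]
        simp [flipS, this, hak]
      · have : k ∈ (Finset.range n).filter (fun k => a k ≠ x k) :=
          Finset.mem_filter.mpr ⟨Finset.mem_range.mpr hk, hak⟩
        simp only [flipS, if_pos this]
        revert hak
        cases a k <;> cases x k <;> simp
  exact IsMeagre.mono hsub (isMeagre_iUnion' fun G =>
    base.preimage_of_isOpenMap (continuous_flipS G) (flipHomeo G).isOpenMap)

/-! ### Measurability helpers -/

lemma measurableSet_boolEq {Y : Type*} [MeasurableSpace Y] {f g : Y → Bool}
    (hf : Measurable f) (hg : Measurable g) : MeasurableSet {y | f y = g y} :=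
  measurableSet_eq_fun hf hg

lemma measurableSet_boolLt {Y : Type*} [MeasurableSpace Y] {f g : Y → Bool}
    (hf : Measurable f) (hg : Measurable g) : MeasurableSet {y | f y < g y} := by
  have : {y | f y < g y} = f ⁻¹' {false} ∩ g ⁻¹' {true} := by
    ext y; simp [Bool.lt_iff]
  rw [this]
  exact (hf (measurableSet_singleton _)).inter (hg (measurableSet_singleton _))

lemma measurableSet_sltLex {ι : Type*} [LinearOrder ι] [Countable ι]
    {Y : Type*} [MeasurableSpace Y] {f g : Y → (ι → Bool)}
    (hf : Measurable f) (hg : Measurable g) : MeasurableSet {y | sltLex (f y) (g y)} := by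
  have heq : {y | sltLex (f y) (g y)} =
      ⋃ i, ((⋂ j, ⋂ (_ : j < i), {y | f y j = g y j}) ∩ {y | f y i < g y i}) := by
    ext y
    constructor
    · rintro ⟨i, h1, h2⟩
      exact mem_iUnion.mpr ⟨i, mem_iInter.mpr fun j => mem_iInter.mpr fun hj => h1 j hj, h2⟩
    · intro hy
      obtain ⟨i, hi⟩ := mem_iUnion.mp hy
      exact ⟨i, fun j hj => mem_iInter.mp (mem_iInter.mp hi.1 j) hj, hi.2⟩
  rw [heq]
  refine MeasurableSet.iUnion fun i => ?_
  refine (MeasurableSet.iInter fun j => MeasurableSet.iInter fun _ => ?_).inter ?_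
  · exact measurableSet_boolEq ((measurable_pi_apply j).comp hf) ((measurable_pi_apply j).comp hg)
  · exact measurableSet_boolLt ((measurable_pi_apply i).comp hf) ((measurable_pi_apply i).comp hg)

lemma measurableSet_le0 {Y : Type*} [MeasurableSpace Y] {f g : Y → XX}
    (hf : Measurable f) (hg : Measurable g) : MeasurableSet {y | le0 (f y) (g y)} := by
  have heq : {y | le0 (f y) (g y)} =
      (⋂ k, {y | f y k = g y k}) ∪
        ⋃ m, ((⋂ k, ⋂ (_ : k > m), {y | f y k = g y k}) ∩ {y | f y m < g y m}) := by
    ext y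
    constructor
    · rintro (h | ⟨m, h1, h2⟩)
      · exact Or.inl (mem_iInter.mpr fun k => congrFun h k)
      · exact Or.inr (mem_iUnion.mpr
          ⟨m, mem_iInter.mpr fun k => mem_iInter.mpr fun hk => h1 k hk, h2⟩)
    · rintro (h | h)
      · exact Or.inl (funext fun k => mem_iInter.mp h k)
      · obtain ⟨m, hm⟩ := mem_iUnion.mp h
        exact Or.inr ⟨m, fun k hk => mem_iInter.mp (mem_iInter.mp hm.1 k) hk, hm.2⟩
  rw [heq]
  refine (MeasurableSet.iInter fun k =>
    measurableSet_boolEq ((measurable_pi_apply k).comp hf)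
      ((measurable_pi_apply k).comp hg)).union ?_
  refine MeasurableSet.iUnion fun m => ?_
  refine (MeasurableSet.iInter fun k => MeasurableSet.iInter fun _ =>
    measurableSet_boolEq ((measurable_pi_apply k).comp hf)
      ((measurable_pi_apply k).comp hg)).inter ?_
  exact measurableSet_boolLt ((measurable_pi_apply m).comp hf) ((measurable_pi_apply m).comp hg)

/-! ### Finite sets with a maximum for `le0` -/

lemma finset_le0_max (s : Finset XX) (hs : s.Nonempty)
    (htot : ∀ c ∈ s, ∀ d ∈ s, le0 c d ∨ le0 d c) :
    ∃ m ∈ s, ∀ c ∈ s, le0 c m := by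
  classical
  induction s using Finset.induction_on with
  | empty => exact absurd hs (by simp)
  | @insert a s ha ih =>
    by_cases hsne : s.Nonempty
    · obtain ⟨m, hm, hmax⟩ := ih hsne (fun c hc d hd =>
        htot c (Finset.mem_insert_of_mem hc) d (Finset.mem_insert_of_mem hd))
      rcases htot a (Finset.mem_insert_self a s) m (Finset.mem_insert_of_mem hm) with h | h
      · refine ⟨m, Finset.mem_insert_of_mem hm, fun c hc => ?_⟩
        rcases Finset.mem_insert.mp hc with rfl | hc
        · exact h
        · exact hmax c hc
      · refine ⟨a, Finset.mem_insert_self a s, fun c hc => ?_⟩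
        rcases Finset.mem_insert.mp hc with rfl | hc
        · exact le0_refl c
        · exact le0_trans (hmax c hc) h
    · rw [Finset.not_nonempty_iff_eq_empty] at hsne
      subst hsne
      exact ⟨a, Finset.mem_insert_self a ∅, fun c hc => by
        rcases Finset.mem_insert.mp hc with rfl | hc
        · exact le0_refl c
        · simp at hc⟩

lemma tail_fixed_finite (z : XX) (N : ℕ) : {c : XX | ∀ k, k ≥ N → c k = z k}.Finite := by
  apply Set.Finite.of_finite_image (f := fun c (i : Fin N) => c i)
  · exact Set.toFinite _
  · intro c hc d hd he
    funext k
    by_cases hk : k < N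
    · exact congrFun he ⟨k, hk⟩
    · rw [hc k (by omega), hd k (by omega)]

lemma set_le0_max {S : Set XX} (hfin : S.Finite) (hne : S.Nonempty)
    (htot : ∀ c ∈ S, ∀ d ∈ S, le0 c d ∨ le0 d c) :
    ∃ m ∈ S, ∀ c ∈ S, le0 c m := by
  obtain ⟨x, hx⟩ := hne
  obtain ⟨m, hm, hmax⟩ := finset_le0_max hfin.toFinset ⟨x, hfin.mem_toFinset.mpr hx⟩
    (fun c hc d hd => htot c (hfin.mem_toFinset.mp hc) d (hfin.mem_toFinset.mp hd))
  exact ⟨m, hfin.mem_toFinset.mp hm, fun c hc => hmax c (hfin.mem_toFinset.mpr hc)⟩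

/-! ### The interval argument -/

lemma interval_agree {a0 b0 c : XX} {N : ℕ} (ha0c : le0 a0 c) (hcb0 : le0 c b0)
    (hN : ∀ k, k ≥ N → a0 k = b0 k) : ∀ k, k ≥ N → c k = a0 k := by
  by_contra hcon
  push_neg at hcon
  obtain ⟨k, hkN, hk⟩ := hcon
  have hE : E0 c a0 := E0_symm (le0_E0 ha0c)
  obtain ⟨m, hkm, hm, hmax⟩ := last_diff hE k hk
  have hmN : N ≤ m := le_trans hkN hkm
  rcases lt_or_gt_of_ne hm with hlt | hlt
  · have hca0 : le0 c a0 := Or.inr ⟨m, hmax, hlt⟩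
    have : a0 = c := le0_antisymm ha0c hca0
    exact hm (congrFun this.symm m)
  · have hb0c : le0 b0 c := by
      refine Or.inr ⟨m, fun j hj => ?_, ?_⟩
      · exact ((hN j (le_trans hmN (le_of_lt hj))).symm).trans (hmax j hj).symm
      · rw [← hN m hmN]; exact hlt
    have : c = b0 := le0_antisymm hcb0 hb0c
    rw [this, ← hN m hmN] at hm
    exact hm rfl

/-! ### The selector set `TT U` -/

/-- The set of `≤₀`-maximal elements of `U` within their `E0`-class. -/
def TT (U : Set XX) : Set XX :=
  {c | c ∈ U ∧ ∀ G : Finset ℕ, flipS G c ∈ U → le0 (flipS G c) c}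

lemma TT_unique {U : Set XX} {t1 t2 : XX} (h1 : t1 ∈ TT U) (h2 : t2 ∈ TT U)
    (hE : E0 t1 t2) : t1 = t2 := by
  obtain ⟨G, hG⟩ := E0_exists_flipS hE
  obtain ⟨G', hG'⟩ := E0_exists_flipS (E0_symm hE)
  have h21 : le0 t2 t1 := by
    have := h1.2 G (by rw [← hG]; exact h2.1)
    rwa [← hG] at this
  have h12 : le0 t1 t2 := by
    have := h2.2 G' (by rw [← hG']; exact h1.1)
    rwa [← hG'] at this
  exact le0_antisymm h12 h21

lemma exists_TT_rep {U : Set XX} (hdown : ∀ a b, le0 a b → b ∈ U → a ∈ U)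
    {a a0 b0 : XX} (ha0E : E0 a0 a) (ha0U : a0 ∈ U) (hb0E : E0 b0 a) (hb0U : b0 ∉ U) :
    ∃ t, E0 t a ∧ t ∈ TT U := by
  obtain ⟨N, hN⟩ : E0 a0 b0 := E0_trans ha0E (E0_symm hb0E)
  set I : Set XX := {c | E0 c a ∧ c ∈ U ∧ ∀ k, k ≥ N → c k = a0 k} with hI
  have hIfin : I.Finite := (tail_fixed_finite a0 N).subset (fun c hc => hc.2.2)
  have hIne : a0 ∈ I := ⟨ha0E, ha0U, fun _ _ => rfl⟩
  have htot : ∀ c ∈ I, ∀ d ∈ I, le0 c d ∨ le0 d c := fun c hc d hd =>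
    E0_total (E0_trans hc.1 (E0_symm hd.1))
  obtain ⟨t, htI, hmax⟩ := set_le0_max hIfin ⟨a0, hIne⟩ htot
  refine ⟨t, htI.1, htI.2.1, ?_⟩
  intro G hGU
  have hcE : E0 (flipS G t) a := E0_trans (E0_flipS G t) htI.1
  rcases E0_total (E0_trans hcE (E0_symm ha0E)) with hca0 | ha0c
  · exact le0_trans hca0 (hmax a0 hIne)
  · have hcb0 : le0 (flipS G t) b0 := by
      rcases E0_total (E0_trans hcE (E0_symm hb0E)) with h | h
      · exact h
      · exact absurd (hdown _ _ h hGU) hb0U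
    have htail : ∀ k, k ≥ N → flipS G t k = a0 k := interval_agree ha0c hcb0 hN
    exact hmax _ ⟨hcE, hGU, htail⟩

/-! ### Invariance helpers -/

lemma inv_iUnion (S : Set XX) (G : Finset ℕ) (a : XX) :
    flipS G a ∈ ⋃ F, flipS F ⁻¹' S ↔ a ∈ ⋃ F, flipS F ⁻¹' S := by
  simp only [mem_iUnion, mem_preimage]
  constructor
  · rintro ⟨F, hF⟩
    refine ⟨symmDiff F G, ?_⟩
    rwa [← flipS_flipS]
  · rintro ⟨F, hF⟩
    refine ⟨symmDiff F G, ?_⟩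
    rwa [flipS_flipS, symmDiff_symmDiff_cancel_right]

lemma inv_iInter (S : Set XX) (G : Finset ℕ) (a : XX) :
    flipS G a ∈ ⋂ F, flipS F ⁻¹' S ↔ a ∈ ⋂ F, flipS F ⁻¹' S := by
  simp only [mem_iInter, mem_preimage]
  constructor
  · intro h F
    have := h (symmDiff F G)
    rwa [flipS_flipS, symmDiff_symmDiff_cancel_right] at this
  · intro h F
    have := h (symmDiff F G)
    rwa [← flipS_flipS] at this

/-! ### The core contradiction -/

lemma main_contra (U : Set XX) (hUmeas : MeasurableSet U)
    (hcompl : ∀ a, a ∉ U ↔ barX a ∈ U)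
    (hdown : ∀ a b, le0 a b → b ∈ U → a ∈ U) : False := by
  classical
  -- U and Uᶜ are nonmeager
  have hUc_eq : Uᶜ = barX ⁻¹' U := by
    ext a
    exact hcompl a
  have hkey : ∀ a, barX a ∉ U ↔ a ∈ U := by
    intro a
    have := hcompl (barX a)
    rwa [barX_barX] at this
  have hU_eq : U = barX ⁻¹' Uᶜ := by
    ext a
    simp only [mem_preimage, mem_compl_iff]
    exact (hkey a).symm
  have hUnm : ¬ IsMeagre U := by
    intro hm
    have h2 : IsMeagre Uᶜ := by
      rw [hUc_eq]
      exact hm.preimage_of_isOpenMap continuous_barX barHomeo.isOpenMap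
    exact not_meagre_pair hm h2
  have hUcnm : ¬ IsMeagre Uᶜ := by
    intro hm
    have h2 : IsMeagre U := by
      rw [hU_eq]
      exact hm.preimage_of_isOpenMap continuous_barX barHomeo.isOpenMap
    exact not_meagre_pair h2 hm
  -- the saturation V and the core W
  set W : Set XX := ⋂ F : Finset ℕ, flipS F ⁻¹' U with hW
  set V : Set XX := ⋃ F : Finset ℕ, flipS F ⁻¹' U with hV
  have hWmeas : MeasurableSet W := MeasurableSet.iInter fun F => (measurable_flipS F) hUmeas
  have hVmeas : MeasurableSet V := MeasurableSet.iUnion fun F => (measurable_flipS F) hUmeas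
  have hWsubU : W ⊆ U := by
    intro a ha
    have := mem_iInter.mp ha ∅
    rwa [mem_preimage, flipS_empty] at this
  have hUsubV : U ⊆ V := by
    intro a ha
    exact mem_iUnion.mpr ⟨∅, by rwa [mem_preimage, flipS_empty]⟩
  have hWmeag : IsMeagre W := by
    rcases zero_one hWmeas.baireMeasurableSet (inv_iInter U) with h | h
    · exact h
    · exact absurd (h.mono (compl_subset_compl.mpr hWsubU)) hUcnm
  have hVcmeag : IsMeagre Vᶜ := by
    rcases zero_one hVmeas.baireMeasurableSet (inv_iUnion U) with h | h
    · exact absurd (h.mono hUsubV) hUnm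
    · exact h
  -- the selector set and its saturation
  have hTmeas : MeasurableSet (TT U) := by
    have heq : TT U = U ∩ ⋂ G : Finset ℕ,
        ((flipS G ⁻¹' U)ᶜ ∪ {c | le0 (flipS G c) c}) := by
      ext c
      simp only [TT, mem_setOf_eq, mem_inter_iff, mem_iInter, mem_union, mem_compl_iff,
        mem_preimage]
      constructor
      · rintro ⟨h1, h2⟩
        refine ⟨h1, fun G => ?_⟩
        by_cases hG : flipS G c ∈ U
        · exact Or.inr (h2 G hG)
        · exact Or.inl hG
      · rintro ⟨h1, h2⟩
        refine ⟨h1, fun G hG => ?_⟩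
        rcases h2 G with h | h
        · exact absurd hG h
        · exact h
    rw [heq]
    refine hUmeas.inter (MeasurableSet.iInter fun G => ?_)
    exact ((measurable_flipS G) hUmeas).compl.union
      (measurableSet_le0 (measurable_flipS G) measurable_id)
  set D : Set XX := ⋃ G : Finset ℕ, flipS G ⁻¹' (TT U) with hD
  have hDmeas : MeasurableSet D := MeasurableSet.iUnion fun G => (measurable_flipS G) hTmeas
  have hVW_sub_D : V ∩ Wᶜ ⊆ D := by
    rintro a ⟨haV, haW⟩
    obtain ⟨F, hF⟩ := mem_iUnion.mp haV
    rw [mem_preimage] at hF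
    have haW' : ∃ G, flipS G a ∉ U := by
      by_contra hcon
      push_neg at hcon
      exact haW (mem_iInter.mpr fun G => hcon G)
    obtain ⟨G, hG⟩ := haW'
    obtain ⟨t, htE, htT⟩ := exists_TT_rep hdown (E0_flipS F a) hF (E0_flipS G a) hG
    obtain ⟨H, hH⟩ := E0_exists_flipS (E0_symm htE)
    exact mem_iUnion.mpr ⟨H, by rw [mem_preimage, ← hH]; exact htT⟩
  have hDcmeag : IsMeagre Dᶜ := by
    apply (isMeagre_union hVcmeag hWmeag).mono
    intro a ha
    by_contra hcon
    simp only [mem_union, mem_compl_iff, not_or, not_not] at hcon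
    exact ha (hVW_sub_D ⟨hcon.1, fun hW' => hcon.2 hW'⟩)
  -- the bit sets
  set B : ℕ → Set XX := fun k => ⋃ G : Finset ℕ, flipS G ⁻¹' (TT U ∩ {c | c k = true})
    with hB
  have hbit : ∀ k, MeasurableSet {c : XX | c k = true} := by
    intro k
    have : {c : XX | c k = true} = (fun c : XX => c k) ⁻¹' {true} := rfl
    rw [this]
    exact (measurable_pi_apply k) (measurableSet_singleton true)
  have hBmeas : ∀ k, MeasurableSet (B k) := fun k =>
    MeasurableSet.iUnion fun G => (measurable_flipS G) (hTmeas.inter (hbit k))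
  have hdichot : ∀ k, IsMeagre (B k ∪ Dᶜ) ∨ IsMeagre (B k ∪ Dᶜ)ᶜ := by
    intro k
    refine zero_one ((hBmeas k).union hDmeas.compl).baireMeasurableSet ?_
    intro G a
    simp only [mem_union, mem_compl_iff]
    exact or_congr (inv_iUnion _ G a) (not_congr (inv_iUnion _ G a))
  set P : ℕ → Prop := fun k => ¬ IsMeagre (B k ∪ Dᶜ) with hP
  set C : ℕ → Set XX := fun k => if P k then (B k)ᶜ ∩ D else B k with hC
  have hCmeag : ∀ k, IsMeagre (C k) := by
    intro k
    by_cases hp : P k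
    · rcases hdichot k with h1 | h1
      · exact absurd h1 hp
      · simp only [hC, if_pos hp]
        rwa [compl_union, compl_compl] at h1
    · simp only [hC, if_neg hp]
      have h1 : IsMeagre (B k ∪ Dᶜ) := not_not.mp hp
      exact h1.mono subset_union_left
  set t0 : XX := fun k => if P k then true else false with ht0def
  set M : Set XX := Dᶜ ∪ ⋃ k, C k with hM
  have hMmeag : IsMeagre M := isMeagre_union hDcmeag (isMeagre_iUnion' hCmeag)
  have hcl : Mᶜ ⊆ ⋃ G : Finset ℕ, ({flipS G t0} : Set XX) := by
    intro x hx
    have hxM : x ∉ M := hx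
    have hxD : x ∈ D := by
      by_contra hc
      exact hxM (Or.inl hc)
    have hxC : ∀ k, x ∉ C k := fun k hk => hxM (Or.inr (mem_iUnion.mpr ⟨k, hk⟩))
    obtain ⟨G, hG⟩ := mem_iUnion.mp hxD
    rw [mem_preimage] at hG
    have ht0 : flipS G x = t0 := by
      funext k
      by_cases hp : P k
      · have hxB : x ∈ B k := by
          have hck := hxC k
          simp only [hC, if_pos hp] at hck
          by_contra hxB
          exact hck ⟨hxB, hxD⟩
        obtain ⟨F, hF⟩ := mem_iUnion.mp hxB
        rw [mem_preimage] at hF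
        have heqt : flipS F x = flipS G x :=
          TT_unique hF.1 hG (E0_trans (E0_flipS F x) (E0_symm (E0_flipS G x)))
        have : flipS F x k = true := hF.2
        rw [heqt] at this
        rw [this]
        simp only [ht0def, if_pos hp]
      · have hxB : x ∉ B k := by
          have hck := hxC k
          simpa only [hC, if_neg hp] using hck
        have hfalse : flipS G x k = false := by
          by_contra hne
          have htrue : flipS G x k = true := by
            revert hne
            cases (flipS G x k) <;> simp
          exact hxB (mem_iUnion.mpr ⟨G, mem_preimage.mpr ⟨hG, htrue⟩⟩)
        rw [hfalse]
        simp only [ht0def, if_neg hp]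
    refine mem_iUnion.mpr ⟨G, ?_⟩
    rw [mem_singleton_iff, ← ht0]
    exact (flipS_flipS_self G x).symm
  exact residual_subset_not_meagre (hMmeag : Mᶜ ∈ residual XX)
    (isMeagre_iUnion' fun G => isMeagre_singleton _) hcl

/-- Conditions (I^B) and (II^B) of the dichotomy are incompatible for a
Borel partial quasi-order on Baire space. -/
theorem dichotomy_incompatible (r : (ℕ → ℕ) → (ℕ → ℕ) → Prop)
    (hrefl : Reflexive r) (htrans : Transitive r)
    (hBorel : MeasurableSet {p : (ℕ → ℕ) × (ℕ → ℕ) | r p.1 p.2}) :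
    ¬ ((∃ α : Ordinal, α < (Cardinal.aleph 1).ord ∧
          ∃ h : (ℕ → ℕ) → ({β : Ordinal // β < α} → Bool),
            Measurable h ∧
            (∀ x y, r x y → leLex (h x) (h y)) ∧
            (∀ x y, h x = h y → r x y ∧ r y x)) ∧
       (∃ F : (ℕ → Bool) → (ℕ → ℕ),
          Continuous F ∧ Function.Injective F ∧
          (∀ a b, le0 a b → r (F a) (F b)) ∧
          (∀ a b, ¬ E0 a b → ¬ r (F a) (F b)))) := by
  rintro ⟨⟨α, hα, h, hmeas, hmono, heq⟩, F, hFc, hFinj, hFmono, hFneg⟩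
  -- the index type is countable and well-ordered
  have hlt : α.card < Cardinal.aleph 1 := Cardinal.lt_ord.mp hα
  have hle : α.card ≤ Cardinal.aleph0 := by
    rw [← Cardinal.succ_aleph0] at hlt
    exact Order.lt_succ_iff.mp hlt
  haveI hcnt : Countable {β : Ordinal // β < α} := by
    have h1 : Cardinal.mk ↥(Set.Iio α) ≤ Cardinal.aleph0 := by
      rw [Ordinal.mk_Iio_ordinal]
      exact Cardinal.lift_le_aleph0.mpr hle
    exact Cardinal.mk_le_aleph0_iff.mp h1
  have hwf : WellFounded ((· < ·) : {β : Ordinal // β < α} → {β : Ordinal // β < α} → Prop) :=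
    InvImage.wf (fun x : {β : Ordinal // β < α} => x.1) Ordinal.lt_wf
  -- the composed map
  set φ : XX → ({β : Ordinal // β < α} → Bool) := fun a => h (F a) with hφ
  have hφm : Measurable φ := hmeas.comp hFc.measurable
  have hφmono : ∀ a b, le0 a b → leLex (φ a) (φ b) := fun a b hab =>
    hmono _ _ (hFmono _ _ hab)
  have hφE0 : ∀ a b, φ a = φ b → E0 a b := by
    intro a b hab
    by_contra hne
    exact hFneg a b hne (heq _ _ hab).1
  -- the set U
  set U : Set XX := {a | sltLex (φ a) (φ (barX a))} with hU
  have hUmeas : MeasurableSet U :=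
    measurableSet_sltLex (f := φ) (g := fun a => φ (barX a)) hφm (hφm.comp measurable_barX)
  have hcompl : ∀ a, a ∉ U ↔ barX a ∈ U := by
    intro a
    have hne : φ a ≠ φ (barX a) := fun he => not_E0_barX a (hφE0 _ _ he)
    constructor
    · intro hnU
      rcases sltLex_total hwf hne with hlt' | hlt'
      · exact absurd hlt' hnU
      · show sltLex (φ (barX a)) (φ (barX (barX a)))
        rw [barX_barX]
        exact hlt'
    · intro hb ha
      have hb' : sltLex (φ (barX a)) (φ (barX (barX a))) := hb
      rw [barX_barX] at hb'
      exact sltLex_asymm ha hb'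
  have hdown : ∀ a b, le0 a b → b ∈ U → a ∈ U := by
    intro a b hab hb
    have h1 : leLex (φ a) (φ b) := hφmono _ _ hab
    have h2 : leLex (φ (barX b)) (φ (barX a)) := hφmono _ _ (le0_barX hab)
    exact sltLex_leLex_trans (leLex_sltLex_trans h1 hb) h2
  exact main_contra U hUmeas hcompl hdown
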